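/- arXiv:1911.04596 — 2 statements merged into one kernel-verified Lean document; each statement's English description precedes it below -/
import Mathlib

section
/- For $1<p<\infty$, the integral $\int_{-1}^1 (1-|s|^p)^{-1/p}\,ds$ converges and equals $\frac{2\pi}{p\sin(\pi/p)}$. -/
open MeasureTheory Real Set

lemma beta_real {a b : ℝ} (ha : 0 < a) (hb : 0 < b) :
    IntegrableOn (fun x : ℝ => x ^ (a - 1) * (1 - x) ^ (b - 1)) (Ioo 0 1) ∧
    ∫ x in Ioo (0 : ℝ) 1, x ^ (a - 1) * (1 - x) ^ (b - 1)
      = Real.Gamma a * Real.Gamma b / Real.Gamma (a + b) := by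
  have hcong : ∀ x ∈ Ioo (0 : ℝ) 1,
      ((x : ℂ) ^ ((a : ℂ) - 1) * (1 - (x : ℂ)) ^ ((b : ℂ) - 1))
        = ((x ^ (a - 1) * (1 - x) ^ (b - 1) : ℝ) : ℂ) := by
    intro x hx
    rw [show ((a : ℂ) - 1) = ((a - 1 : ℝ) : ℂ) by push_cast; ring,
      show ((b : ℂ) - 1) = ((b - 1 : ℝ) : ℂ) by push_cast; ring,
      show (1 - (x : ℂ)) = ((1 - x : ℝ) : ℂ) by push_cast; ring,
      ← Complex.ofReal_cpow hx.1.le, ← Complex.ofReal_cpow (by linarith [hx.2]),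
      ← Complex.ofReal_mul]
  have hconv := Complex.betaIntegral_convergent (u := (a : ℂ)) (v := (b : ℂ))
    (by simpa using ha) (by simpa using hb)
  have hInt : IntegrableOn (fun x : ℝ =>
      ((x : ℂ) ^ ((a : ℂ) - 1) * (1 - (x : ℂ)) ^ ((b : ℂ) - 1))) (Ioo 0 1) := by
    exact hconv.1.mono_set Ioo_subset_Ioc_self
  constructor
  · refine IntegrableOn.congr_fun (f := fun x : ℝ =>
      ((x : ℂ) ^ ((a : ℂ) - 1) * (1 - (x : ℂ)) ^ ((b : ℂ) - 1)).re)
      hInt.re (fun x hx => ?_) measurableSet_Ioo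
    simp only [hcong x hx, Complex.ofReal_re]
  · have h1 : (∫ x in Ioo (0 : ℝ) 1, ((x : ℂ) ^ ((a : ℂ) - 1) * (1 - (x : ℂ)) ^ ((b : ℂ) - 1)))
        = Complex.betaIntegral a b := by
      rw [Complex.betaIntegral, intervalIntegral.integral_of_le zero_le_one,
        integral_Ioc_eq_integral_Ioo]
    have h2 : (∫ x in Ioo (0 : ℝ) 1, ((x : ℂ) ^ ((a : ℂ) - 1) * (1 - (x : ℂ)) ^ ((b : ℂ) - 1)))
        = ((∫ x in Ioo (0 : ℝ) 1, x ^ (a - 1) * (1 - x) ^ (b - 1) : ℝ) : ℂ) := by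
      rw [setIntegral_congr_fun measurableSet_Ioo hcong]
      exact integral_ofReal
    have hbeta : Complex.betaIntegral a b
        = ((Real.Gamma a * Real.Gamma b / Real.Gamma (a + b) : ℝ) : ℂ) := by
      have h3 := Complex.Gamma_mul_Gamma_eq_betaIntegral (s := (a : ℂ)) (t := (b : ℂ))
        (by simpa using ha) (by simpa using hb)
      have hab : Real.Gamma (a + b) ≠ 0 := (Real.Gamma_pos_of_pos (by linarith)).ne'
      rw [show ((a : ℂ) + (b : ℂ)) = ((a + b : ℝ) : ℂ) by push_cast; ring] at h3
      rw [Complex.Gamma_ofReal, Complex.Gamma_ofReal, Complex.Gamma_ofReal] at h3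
      have hab' : (Real.Gamma (a + b) : ℂ) ≠ 0 := by exact_mod_cast hab
      push_cast
      rw [eq_div_iff hab']
      linear_combination -h3
    have := h2.symm.trans (h1.trans hbeta)
    exact_mod_cast this

theorem stmt_0 (p : ℝ) (hp : 1 < p) :
    MeasureTheory.IntegrableOn (fun s : ℝ => (1 - |s| ^ p) ^ (-1 / p)) (Set.Ioo (-1 : ℝ) 1) ∧
    ∫ s in Set.Ioo (-1 : ℝ) 1, (1 - |s| ^ p) ^ (-1 / p)
      = 2 * Real.pi / (p * Real.sin (Real.pi / p)) := by
  have hp0 : (0 : ℝ) < p := by linarith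
  set f : ℝ → ℝ := fun s => (1 - |s| ^ p) ^ (-1 / p) with hf
  have ha : (0 : ℝ) < 1 / p := by positivity
  have hb : (0 : ℝ) < 1 - 1 / p := by
    have : 1 / p < 1 := by rw [div_lt_one hp0]; linarith
    linarith
  obtain ⟨hBint, hBval⟩ := beta_real ha hb
  -- the beta integrand
  set g : ℝ → ℝ := fun x => x ^ (1 / p - 1) * (1 - x) ^ (1 - 1 / p - 1) with hg
  -- substitution φ u = u ^ (1/p)
  set φ : ℝ → ℝ := fun u => u ^ (1 / p) with hφ
  have hderiv : ∀ u ∈ Set.Ioo (0 : ℝ) 1,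
      HasDerivWithinAt φ ((1 / p) * u ^ (1 / p - 1)) (Set.Ioo (0 : ℝ) 1) u := fun u hu =>
    (Real.hasDerivAt_rpow_const (Or.inl hu.1.ne')).hasDerivWithinAt
  have hinj : Set.InjOn φ (Set.Ioo (0 : ℝ) 1) := by
    intro x hx y hy hxy
    have hmono : ∀ a b : ℝ, 0 ≤ a → a < b → φ a < φ b := fun a b h1 h2 =>
      Real.rpow_lt_rpow h1 h2 ha
    rcases lt_trichotomy x y with h | h | h
    · exact absurd hxy (hmono x y hx.1.le h).ne
    · exact h
    · exact absurd hxy.symm (hmono y x hy.1.le h).ne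
  have himg : φ '' Set.Ioo (0 : ℝ) 1 = Set.Ioo (0 : ℝ) 1 := by
    ext y
    constructor
    · rintro ⟨u, hu, rfl⟩
      exact ⟨Real.rpow_pos_of_pos hu.1 _, Real.rpow_lt_one hu.1.le hu.2 ha⟩
    · intro hy
      refine ⟨y ^ p, ⟨Real.rpow_pos_of_pos hy.1 _, Real.rpow_lt_one hy.1.le hy.2 hp0⟩, ?_⟩
      show (y ^ p) ^ (1 / p) = y
      rw [← Real.rpow_mul hy.1.le, mul_one_div_cancel hp0.ne', Real.rpow_one]
  have hcong : ∀ u ∈ Set.Ioo (0 : ℝ) 1,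
      |(1 / p) * u ^ (1 / p - 1)| • f (φ u) = (1 / p) * g u := by
    intro u hu
    have h1 : |φ u| = u ^ (1 / p) := abs_of_nonneg (Real.rpow_nonneg hu.1.le _)
    have h2 : (u ^ (1 / p)) ^ p = u := by
      rw [← Real.rpow_mul hu.1.le, one_div_mul_cancel hp0.ne', Real.rpow_one]
    have h3 : |(1 / p) * u ^ (1 / p - 1)| = (1 / p) * u ^ (1 / p - 1) :=
      abs_of_nonneg (mul_nonneg (by positivity) (Real.rpow_pos_of_pos hu.1 _).le)
    rw [smul_eq_mul, h3]
    show 1 / p * u ^ (1 / p - 1) * (1 - |φ u| ^ p) ^ (-1 / p) = 1 / p * g u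
    rw [h1, h2, hg]
    have : (1 : ℝ) - 1 / p - 1 = -1 / p := by ring
    rw [this]; ring
  -- integral over Ioo 0 1
  have hint01 : MeasureTheory.IntegrableOn f (Set.Ioo (0 : ℝ) 1) := by
    rw [← himg, integrableOn_image_iff_integrableOn_abs_deriv_smul measurableSet_Ioo hderiv hinj]
    exact MeasureTheory.IntegrableOn.congr_fun (f := fun x => 1 / p * g x)
      (hBint.const_mul (1 / p)) (fun u hu => (hcong u hu).symm) measurableSet_Ioo
  have hval01 : ∫ x in Set.Ioo (0 : ℝ) 1, f x
      = (1 / p) * (Real.pi / Real.sin (Real.pi / p)) := by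
    conv_lhs => rw [← himg]
    rw [integral_image_eq_integral_abs_deriv_smul measurableSet_Ioo hderiv hinj,
      setIntegral_congr_fun measurableSet_Ioo hcong, integral_const_mul, hBval]
    have hsum : 1 / p + (1 - 1 / p) = 1 := by ring
    rw [hsum, Real.Gamma_one, div_one, Real.Gamma_mul_Gamma_one_sub, mul_one_div]
  -- negative side via reflection
  have hfeven : ∀ x : ℝ, f (-x) = f x := fun x => by simp [hf, abs_neg]
  have A : MeasurableEmbedding (fun x : ℝ => -x) := (Homeomorph.neg ℝ).measurableEmbedding
  have hpre : (fun x : ℝ => -x) ⁻¹' Set.Ioo (-1 : ℝ) 0 = Set.Ioo (0 : ℝ) 1 := by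
    ext x; simp [and_comm, neg_lt, lt_neg]
  have hintneg : MeasureTheory.IntegrableOn f (Set.Ioo (-1 : ℝ) 0) := by
    have hmap := A.integrableOn_map_iff (f := f) (μ := (volume : Measure ℝ))
      (s := Set.Ioo (-1 : ℝ) 0)
    rw [Measure.map_neg_eq_self (volume : Measure ℝ), hpre] at hmap
    rw [hmap]
    refine MeasureTheory.IntegrableOn.congr_fun (f := f) hint01
      (fun x hx => (hfeven x).symm) measurableSet_Ioo
  have hvalneg : ∫ x in Set.Ioo (-1 : ℝ) 0, f x = ∫ x in Set.Ioo (0 : ℝ) 1, f x := by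
    have := A.setIntegral_map (μ := volume) f (Set.Ioo (-1 : ℝ) 0)
    rw [Measure.map_neg_eq_self (volume : Measure ℝ), hpre] at this
    rw [this]
    exact setIntegral_congr_fun measurableSet_Ioo fun x hx => hfeven x
  -- combine: Ioo (-1) 1 = Ioc (-1) 0 ∪ Ioo 0 1
  have hunion : Set.Ioo (-1 : ℝ) 1 = Set.Ioc (-1 : ℝ) 0 ∪ Set.Ioo (0 : ℝ) 1 := by
    ext x
    simp only [Set.mem_Ioo, Set.mem_Ioc, Set.mem_union]
    constructor
    · rintro ⟨h1, h2⟩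
      rcases le_or_gt x 0 with h | h
      · exact Or.inl ⟨h1, h⟩
      · exact Or.inr ⟨h, h2⟩
    · rintro (⟨h1, h2⟩ | ⟨h1, h2⟩) <;> constructor <;> linarith
  have hintIoc : MeasureTheory.IntegrableOn f (Set.Ioc (-1 : ℝ) 0) :=
    (integrableOn_Ioc_iff_integrableOn_Ioo).mpr hintneg
  have hdisj : Disjoint (Set.Ioc (-1 : ℝ) 0) (Set.Ioo (0 : ℝ) 1) := by
    refine Set.disjoint_left.mpr fun x hx hx' => absurd hx.2 (not_le.mpr hx'.1)
  constructor
  · rw [hunion]; exact hintIoc.union hint01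
  · rw [hunion, setIntegral_union hdisj measurableSet_Ioo hintIoc hint01,
      integral_Ioc_eq_integral_Ioo, hvalneg, hval01]
    field_simp
    ring
end

section
/- For $1<p<\infty$, the map $F(x) = \int_0^x (1-|s|^p)^{-1/p} ds$ is a strictly increasing homeomorphism from $[-1,1]$ onto $[-\pi_p/2, \pi_p/2]$, where $\pi_p = \frac{2\pi}{p\sin(\pi/p)}$. -/
/-!
`F` is a primitive of the positive integrand `(1 - |s|^p)^(-1/p)`, which is integrable on `[-1, 1]`
because `(1 - s^p)^(-1/p) ≤ (1 - s)^(-1/p)` on `[0, 1]` and `-1/p > -1`; hence `F` is continuous,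
strictly increasing and odd. The substitution `t = s^p` turns `F 1` into the Beta integral
`B(1/p, 1 - 1/p) / p = Γ(1/p) Γ(1 - 1/p) / p`, which equals `π / (p sin(π/p)) = π_p / 2` by Euler's
reflection formula. A continuous bijection from a compact space to a Hausdorff space is a
homeomorphism.
-/

open MeasureTheory Real

/-- The generalized half-period `π_p = 2π/(p sin(π/p))`. -/
noncomputable def pPi (p : ℝ) : ℝ := 2 * Real.pi / (p * Real.sin (Real.pi / p))

/-- `F(x) = ∫₀ˣ (1-|s|^p)^{-1/p} ds`, the inverse of the `p`-sine function. -/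
noncomputable def pF (p : ℝ) (x : ℝ) : ℝ := ∫ s in (0 : ℝ)..x, (1 - |s| ^ p) ^ (-1 / p)

open Set intervalIntegral

theorem integral_rpow_mul_one_sub_rpow {a b : ℝ} (ha : 0 < a) (hb : 0 < b) :
    ∫ t in (0 : ℝ)..1, t ^ (a - 1) * (1 - t) ^ (b - 1) = Gamma a * Gamma b / Gamma (a + b) := by
  apply Complex.ofReal_injective
  have hbeta := Complex.betaIntegral_eq_Gamma_mul_div a b (by simpa) (by simpa)
  push_cast [← Complex.Gamma_ofReal, ← hbeta, ← intervalIntegral.integral_ofReal]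
  refine integral_congr fun t ht => ?_
  rw [uIcc_of_le zero_le_one] at ht
  push_cast [Complex.ofReal_cpow ht.1, Complex.ofReal_cpow (sub_nonneg.2 ht.2)]
  rfl

/- `integral_comp_rpow_Ioi_of_pos` needs no integrability hypothesis, so we substitute on `Ioi 0`
with both integrands cut off at `1`. -/
theorem integral_one_sub_rpow_rpow {p : ℝ} (hp : 0 < p) (q : ℝ) :
    ∫ s in (0 : ℝ)..1, (1 - s ^ p) ^ q = p⁻¹ * ∫ t in (0 : ℝ)..1, t ^ (p⁻¹ - 1) * (1 - t) ^ q := by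
  have hsubst := integral_comp_rpow_Ioi_of_pos hp
    (g := (Iic 1).indicator fun t => t ^ (p⁻¹ - 1) * (1 - t) ^ q)
  have hcongr : EqOn (fun x => (p * x ^ (p - 1)) •
        (Iic 1).indicator (fun t => t ^ (p⁻¹ - 1) * (1 - t) ^ q) (x ^ p))
      ((Iic 1).indicator fun s => p * (1 - s ^ p) ^ q) (Ioi 0) := by
    intro x (hx : 0 < x)
    have hle : x ^ p ≤ 1 ↔ x ≤ 1 := by simpa using rpow_le_rpow_iff hx.le zero_le_one hp
    by_cases h1 : x ≤ 1
    · have hpow : x ^ (p - 1) * (x ^ p) ^ (p⁻¹ - 1) = 1 := by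
        rw [← rpow_mul hx.le, ← rpow_add hx, mul_sub, mul_inv_cancel₀ hp.ne']
        simp
      simp only [indicator_of_mem (show x ^ p ∈ Iic 1 from hle.2 h1),
        indicator_of_mem (show x ∈ Iic 1 from h1), smul_eq_mul]
      linear_combination (p * (1 - x ^ p) ^ q) * hpow
    · simp [indicator_of_notMem (show x ^ p ∉ Iic 1 from fun h => h1 (hle.1 h)),
        indicator_of_notMem (show x ∉ Iic 1 from h1)]
  rw [setIntegral_congr_fun measurableSet_Ioi hcongr, setIntegral_indicator measurableSet_Iic,
    setIntegral_indicator measurableSet_Iic, Ioi_inter_Iic, MeasureTheory.integral_const_mul,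
    ← integral_of_le zero_le_one, ← integral_of_le zero_le_one] at hsubst
  rw [← hsubst, inv_mul_cancel_left₀ hp.ne']

theorem intervalIntegrable_one_sub_abs_rpow_rpow {p q : ℝ} (hp : 1 ≤ p) (hq : -1 < q)
    (hq₀ : q ≤ 0) : IntervalIntegrable (fun s => (1 - |s| ^ p) ^ q) volume (-1) 1 := by
  have hdom : IntervalIntegrable (fun s => (1 - s) ^ q) volume 0 1 := by
    simpa using (intervalIntegrable_rpow' hq (a := 1) (b := 0)).comp_sub_left 1
  have hright : IntervalIntegrable (fun s => (1 - |s| ^ p) ^ q) volume 0 1 := by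
    refine hdom.mono_fun (Measurable.aestronglyMeasurable (by fun_prop)) ?_
    rw [uIoc_of_le zero_le_one]
    filter_upwards [ae_restrict_mem measurableSet_Ioc] with s ⟨hs₀, hs₁⟩
    rw [abs_of_pos hs₀]
    rcases hs₁.eq_or_lt with rfl | hs₁
    · simp
    have hsp : s ^ p ≤ s := by simpa using rpow_le_rpow_of_exponent_ge hs₀ hs₁.le hp
    have hsp₁ : s ^ p ≤ 1 := rpow_le_one hs₀.le hs₁.le (by linarith)
    rw [norm_of_nonneg (rpow_nonneg (sub_nonneg.2 hsp₁) _),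
      norm_of_nonneg (rpow_nonneg (by linarith) _)]
    exact rpow_le_rpow_of_nonpos (by linarith) (by linarith) hq₀
  refine IntervalIntegrable.trans ?_ hright
  simpa using ((IntervalIntegrable.iff_comp_neg (h := enorm_ne_top)).mp hright).symm

theorem exists_homeomorph_Icc_of_strictMonoOn {α β : Type*}
    [ConditionallyCompleteLinearOrder α] [TopologicalSpace α] [OrderTopology α]
    [DenselyOrdered α] [LinearOrder β] [TopologicalSpace β] [OrderClosedTopology β]
    {f : α → β} {a b : α} (hab : a ≤ b) (hmono : StrictMonoOn f (Icc a b))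
    (hcont : ContinuousOn f (Icc a b)) :
    ∃ e : Icc a b ≃ₜ Icc (f a) (f b), ∀ x, (e x : β) = f x := by
  have hmaps : MapsTo f (Icc a b) (Icc (f a) (f b)) := fun x hx =>
    ⟨hmono.monotoneOn (left_mem_Icc.2 hab) hx hx.1, hmono.monotoneOn hx (right_mem_Icc.2 hab) hx.2⟩
  have hbij : BijOn f (Icc a b) (Icc (f a) (f b)) :=
    ⟨hmaps, hmono.injOn, intermediate_value_Icc hab hcont⟩
  exact ⟨Continuous.homeoOfEquivCompactToT2 (f := hbij.equiv f) (hcont.mapsToRestrict hmaps),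
    fun _ => rfl⟩

section PSine

variable {p : ℝ}

lemma pF_neg (p x : ℝ) : pF p (-x) = -pF p x := by
  have h := integral_comp_neg (a := 0) (b := x) fun s : ℝ => (1 - |s| ^ p) ^ (-1 / p)
  simp only [abs_neg, neg_zero] at h
  rw [pF, pF, h, integral_symm (-x) 0]

lemma pF_one (hp : 1 < p) : pF p 1 = pPi p / 2 := by
  have hp₀ : 0 < p := by linarith
  have hsin : sin (π / p) ≠ 0 := (sin_pos_of_pos_of_lt_pi (by positivity)
    ((div_lt_iff₀ hp₀).2 (by nlinarith [pi_pos]))).ne'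
  have hbeta := integral_rpow_mul_one_sub_rpow (inv_pos.2 hp₀) (b := 1 - p⁻¹)
    (by linarith [inv_lt_one_of_one_lt₀ hp])
  rw [add_sub_cancel, Gamma_one, div_one, Gamma_mul_Gamma_one_sub, sub_sub_cancel_left] at hbeta
  calc pF p 1 = ∫ s in (0 : ℝ)..1, (1 - s ^ p) ^ (-p⁻¹) := by
        refine integral_congr fun s hs => ?_
        rw [uIcc_of_le zero_le_one] at hs
        simp only [abs_of_nonneg hs.1, neg_div, one_div]
    _ = pPi p / 2 := by
        rw [integral_one_sub_rpow_rpow hp₀, hbeta, pPi]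
        field_simp

lemma intervalIntegrable_pF_integrand (hp : 1 < p) :
    IntervalIntegrable (fun s => (1 - |s| ^ p) ^ (-1 / p)) volume (-1) 1 := by
  have hp₀ : 0 < p := by linarith
  refine intervalIntegrable_one_sub_abs_rpow_rpow hp.le ?_
    (by rw [neg_div]; exact neg_nonpos.2 (by positivity))
  rw [neg_div, neg_lt_neg_iff, div_lt_one hp₀]
  exact hp

lemma pF_strictMonoOn (hp : 1 < p) : StrictMonoOn (pF p) (Icc (-1) 1) := by
  intro x hx y hy hxy
  have hint {u v : ℝ} (hu : u ∈ Icc (-1 : ℝ) 1) (hv : v ∈ Icc (-1 : ℝ) 1) :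
      IntervalIntegrable (fun s => (1 - |s| ^ p) ^ (-1 / p)) volume u v :=
    (intervalIntegrable_pF_integrand hp).mono_set
      (by rw [uIcc_of_le (show (-1 : ℝ) ≤ 1 by norm_num)]; exact uIcc_subset_Icc hu hv)
  have hpos : 0 < ∫ s in x..y, (1 - |s| ^ p) ^ (-1 / p) := by
    refine intervalIntegral_pos_of_pos_on (hint hx hy) (fun s hs => rpow_pos_of_pos ?_ _) hxy
    have hs₁ : |s| < 1 := abs_lt.2 ⟨hx.1.trans_lt hs.1, hs.2.trans_le hy.2⟩
    exact sub_pos.2 (rpow_lt_one (abs_nonneg s) hs₁ (by linarith))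
  have h₀ : (0 : ℝ) ∈ Icc (-1) 1 := by norm_num
  rw [← integral_interval_sub_left (hint h₀ hy) (hint h₀ hx)] at hpos
  exact sub_pos.1 hpos

lemma pF_continuousOn (hp : 1 < p) : ContinuousOn (pF p) (Icc (-1) 1) := by
  have h := continuousOn_primitive_interval' (a := 0) (intervalIntegrable_pF_integrand hp)
    (by rw [uIcc_of_le (by norm_num)]; norm_num)
  rwa [uIcc_of_le (by norm_num)] at h

end PSine

theorem stmt_1 (p : ℝ) (hp : 1 < p) :
    StrictMonoOn (pF p) (Set.Icc (-1 : ℝ) 1) ∧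
    ∃ e : Set.Icc (-1 : ℝ) 1 ≃ₜ Set.Icc (-(pPi p) / 2) (pPi p / 2),
      ∀ x : Set.Icc (-1 : ℝ) 1, (e x : ℝ) = pF p (x : ℝ) := by
  refine ⟨pF_strictMonoOn hp, ?_⟩
  have hneg : pF p (-1) = -(pPi p) / 2 := by rw [pF_neg, pF_one hp, neg_div]
  rw [← hneg, ← pF_one hp]
  exact exists_homeomorph_Icc_of_strictMonoOn (by norm_num) (pF_strictMonoOn hp)
    (pF_continuousOn hp)
end
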